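/- Let C be a function from binary trees to the reals satisfying C(leaf) = 0 and C(node(l, d, r)) = 1 + ½·C(l) + ½·C(r) for all trees l, r and data d (so C(t) is the expected number of recursive calls of the function descend, which at each internal node recurses into the left or right subtree with probability ½ each, at a cost of 1 per recursive call). Then for every binary tree t, C(t) ≤ log₂(|t|). -/
import Mathlib


/-- Binary trees with data elements of type `α` at internal nodes. -/
inductive BTree (α : Type) : Type
  | leaf : BTree α
  | node : BTree α → α → BTree α → BTree α

/-- The size of a tree is its number of leaves. -/
def BTree.size {α : Type} : BTree α → ℕ
  | .leaf => 1
  | .node l _ r => l.size + r.size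

lemma BTree.one_le_size {α : Type} (t : BTree α) : 1 ≤ t.size := by
  induction t with
  | leaf => simp [BTree.size]
  | node l d r hl hr => simp [BTree.size]; omega

lemma logb_am_gm (a b : ℝ) (ha : 1 ≤ a) (hb : 1 ≤ b) :
    1 + (1/2) * Real.logb 2 a + (1/2) * Real.logb 2 b ≤ Real.logb 2 (a + b) := by
  have ha0 : 0 < a := by linarith
  have hb0 : 0 < b := by linarith
  have hab : a * b ≤ ((a + b)/2)^2 := by nlinarith [sq_nonneg (a - b)]
  have h1 : Real.logb 2 (a * b) ≤ Real.logb 2 (((a + b)/2)^2) :=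
    by gcongr; norm_num
  rw [Real.logb_mul (ne_of_gt ha0) (ne_of_gt hb0)] at h1
  rw [show ((a+b)/2)^2 = ((a+b)/2) * ((a+b)/2) by ring,
    Real.logb_mul (by positivity) (by positivity),
    Real.logb_div (by positivity) (by norm_num)] at h1
  have h2 : Real.logb 2 2 = 1 := by simp
  linarith

/-- If `C : BTree α → ℝ` satisfies `C leaf = 0` and
`C (node l d r) = 1 + ½·C l + ½·C r` (the expected number of recursive calls of `descend`),
then `C t ≤ log₂ |t|` for every binary tree `t`. -/
theorem descend_expected_cost_le_log {α : Type} (C : BTree α → ℝ)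
    (hleaf : C BTree.leaf = 0)
    (hnode : ∀ (l : BTree α) (d : α) (r : BTree α),
      C (BTree.node l d r) = 1 + (1 / 2) * C l + (1 / 2) * C r) :
    ∀ t : BTree α, C t ≤ Real.logb 2 (t.size : ℝ) := by
  intro t
  induction t with
  | leaf => simp [BTree.size, hleaf]
  | node l d r hl hr =>
    have hal : (1 : ℝ) ≤ l.size := by exact_mod_cast l.one_le_size
    have har : (1 : ℝ) ≤ r.size := by exact_mod_cast r.one_le_size
    have key := logb_am_gm (l.size : ℝ) (r.size : ℝ) hal har
    rw [hnode]
    simp only [BTree.size, Nat.cast_add]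
    linarith
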